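/- arXiv:2011.01592 — 4 statements merged into one kernel-verified Lean document; each statement's English description precedes it below -/
import Mathlib

section
/- Fix integers k ≥ q ≥ 1 and, for each nonempty subset I of the color set [k] with |I| ≤ q, a positive integer p_I. Let G((p_I)_I) denote the smallest positive integer n such that every Gallai-k-coloring of K_n contains, for some such subset I, a set of p_I vertices all of whose induced edges have colors belonging to I. Then G((p_I)_I) ≤ 4 · max_{1≤i≤k} G((p_I^{(i)})_I), where p_I^{(i)} = p_I − 1 if i ∈ I and p_I^{(i)} = p_I otherwise. -/
open Finset

/-- A Gallai coloring: a symmetric edge-coloring of the complete graph on `V`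
with no rainbow triangle. -/
def IsGallai {V β : Type*} (c : V → V → β) : Prop :=
  (∀ a b, c a b = c b a) ∧
  ∀ a b d : V, a ≠ b → a ≠ d → b ≠ d →
    ¬(c a b ≠ c a d ∧ c a b ≠ c b d ∧ c a d ≠ c b d)

/-- The set of colors appearing on edges inside the vertex set `S`. -/
def colorsOn {V β : Type*} [DecidableEq V] [DecidableEq β]
    (c : V → V → β) (S : Finset V) : Finset β :=
  ((S ×ˢ S).filter fun p => p.1 ≠ p.2).image fun p => c p.1 p.2

/-- `gallaiNum k q p` is the smallest positive `n` such that every Gallai-`k`-coloring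
of `K_n` contains a set of `p` vertices whose induced edges use at most `q` colors. -/
noncomputable def gallaiNum (k q p : ℕ) : ℕ :=
  sInf {n : ℕ | 0 < n ∧ ∀ c : Fin n → Fin n → Fin k, IsGallai c →
    ∃ S : Finset (Fin n), S.card = p ∧ (colorsOn c S).card ≤ q}

/-- The smallest positive `n` such that every Gallai-`k`-coloring of `K_n` contains,
for some nonempty set `I` of at most `q` colors, a set of `P I` vertices all of whose
induced edges have colors in `I`. -/
noncomputable def multiGallaiNum (k q : ℕ) (P : Finset (Fin k) → ℕ) : ℕ :=
  sInf {n : ℕ | 0 < n ∧ ∀ c : Fin n → Fin n → Fin k, IsGallai c →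
    ∃ I : Finset (Fin k), I.Nonempty ∧ I.card ≤ q ∧
      ∃ S : Finset (Fin n), S.card = P I ∧ ∀ a ∈ S, ∀ b ∈ S, a ≠ b → c a b ∈ I}

/-!
A Gallai coloring of `K_n`, `n ≥ 2`, has a nontrivial cut crossed by at most two colors (the weak
form of Gallai's theorem). Some vertex `v` lies on a side of size at most `n / 2`, so at least
`n / 4` vertices are joined to `v` in one color `i`. For `n = 4 · max_i G(p^{(i)})` these
neighbours contain a set of `p^{(i)}_I` vertices using colors from `I`, and adding `v` when
`i ∈ I` turns it into one of `p_I` vertices.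

The cut is found by induction on `n`. Delete a vertex `x` and cut the rest with colors `r, y`.
Either `x` joins a side, or it sends a color `d ∉ {r, y}` into the side `X`. A component of the
`d`-colored graph is a module: outside vertices see it in a single color. If the `d`-component of
`x` is proper, contract it to `x` and induct. Otherwise `x` is a cut vertex of the connected
`d`-colored graph, and the component `F` of that graph minus `x` containing a vertex which `x`
sees in a color `e ≠ d` is crossed only by the colors `d` and `e`.
-/

section TwoColoredCut

variable {V β : Type*} {c : V → V → β}

theorem IsGallai.comp {W : Type*} (hc : IsGallai c) {f : W → V} (hf : Function.Injective f) :
    IsGallai fun a b => c (f a) (f b) :=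
  ⟨fun a b => hc.1 (f a) (f b), fun a b d hab had hbd =>
    hc.2 (f a) (f b) (f d) (hf.ne hab) (hf.ne had) (hf.ne hbd)⟩

theorem IsGallai.eq_or_eq_of_ne (hc : IsGallai c) {a b d : V} (hab : a ≠ b) (had : a ≠ d)
    (h : c a b ≠ c a d) : c b d = c a b ∨ c b d = c a d := by
  have hbd : b ≠ d := by rintro rfl; exact h rfl
  by_contra! h'
  exact hc.2 a b d hab had hbd ⟨h, fun e => h'.1 e.symm, fun e => h'.2 e.symm⟩

def ColorReach (c : V → V → β) (S : Finset V) (d : β) : V → V → Prop :=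
  Relation.ReflTransGen fun u v => u ∈ S ∧ v ∈ S ∧ c u v = d

namespace ColorReach

variable {S : Finset V} {d : β} {u v w x : V}

theorem single (hu : u ∈ S) (hv : v ∈ S) (h : c u v = d) : ColorReach c S d u v :=
  Relation.ReflTransGen.single ⟨hu, hv, h⟩

theorem trans (h₁ : ColorReach c S d u v) (h₂ : ColorReach c S d v w) :
    ColorReach c S d u w :=
  Relation.ReflTransGen.trans h₁ h₂

theorem symm (hsym : ∀ a b, c a b = c b a) (h : ColorReach c S d u v) : ColorReach c S d v u := by
  induction h with
  | refl => exact .refl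
  | tail _ hst ih =>
    exact Relation.ReflTransGen.head ⟨hst.2.1, hst.1, (hsym _ _).trans hst.2.2⟩ ih

theorem color_eq (hc : IsGallai c) (h : ColorReach c S d x v) (hw : w ∈ S)
    (hxw : ¬ ColorReach c S d x w) : c v w = c x w := by
  induction h with
  | refl => rfl
  | @tail t v hxt htv ih =>
    obtain ⟨ht, hv, htv⟩ := htv
    have hwt : w ≠ t := by rintro rfl; exact hxw hxt
    have hwv : w ≠ v := by rintro rfl; exact hxw (hxt.tail ⟨ht, hv, htv⟩)
    rw [← ih]
    by_contra hne
    rcases hc.eq_or_eq_of_ne hwt hwv (by rwa [hc.1 w t, hc.1 w v, ne_comm]) with h | h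
    · exact hxw (hxt.tail ⟨ht, hw, (hc.1 t w).trans (h.symm.trans htv)⟩)
    · exact hxw <|
        (hxt.tail ⟨ht, hv, htv⟩).tail ⟨hv, hw, (hc.1 v w).trans (h.symm.trans htv)⟩

theorem exists_first_step [DecidableEq V] (hx : x ∈ S) (h : ColorReach c S d x w) (hw : w ≠ x) :
    ∃ v ∈ S.erase x, c x v = d ∧ ColorReach c (S.erase x) d v w := by
  induction h with
  | refl => exact absurd rfl hw
  | @tail t w _ htw ih =>
    obtain ⟨ht, hw', htw⟩ := htw
    by_cases htx : t = x
    · subst htx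
      exact ⟨w, mem_erase.2 ⟨hw, hw'⟩, htw, .refl⟩
    · obtain ⟨v, hv, hxv, hvt⟩ := ih htx
      exact ⟨v, hv, hxv,
        hvt.tail ⟨mem_erase.2 ⟨htx, ht⟩, mem_erase.2 ⟨hw, hw'⟩, htw⟩⟩

theorem mem_of_mem [DecidableEq V] {X : Finset V} (hX : ∀ a ∈ X, ∀ b ∈ S \ X, c a b ≠ d)
    (h : ColorReach c S d u v) (hu : u ∈ X) : v ∈ X := by
  induction h with
  | refl => exact hu
  | @tail t w _ htw ih =>
    by_contra hw
    exact hX t ih w (mem_sdiff.2 ⟨htw.2.1, hw⟩) htw.2.2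

end ColorReach

variable [DecidableEq V]

def HasTwoColoredCut (c : V → V → β) (S : Finset V) : Prop :=
  ∃ X ⊆ S, X.Nonempty ∧ (S \ X).Nonempty ∧
    ∃ r y : β, ∀ u ∈ X, ∀ w ∈ S \ X, c u w = r ∨ c u w = y

namespace HasTwoColoredCut

variable {S T : Finset V}

theorem of_erase (hsym : ∀ a b, c a b = c b a) {x : V} {X : Finset V} {r y : β} (hx : x ∈ S)
    (hXW : X ⊆ S.erase x) (hX : X.Nonempty)
    (hXY : ∀ u ∈ X, ∀ w ∈ S.erase x \ X, c u w = r ∨ c u w = y)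
    (hxX : ∀ a ∈ X, c x a = r ∨ c x a = y) : HasTwoColoredCut c S := by
  refine ⟨X, hXW.trans (erase_subset x S), hX, ⟨x, mem_sdiff.2 ⟨hx, fun h => ?_⟩⟩, r, y,
    fun u hu w hw => ?_⟩
  · exact notMem_erase x S (hXW h)
  by_cases hwx : w = x
  · rw [hwx, hsym]
    exact hxX u hu
  · obtain ⟨hwS, hwX⟩ := mem_sdiff.1 hw
    exact hXY u hu w (mem_sdiff.2 ⟨mem_erase.2 ⟨hwx, hwS⟩, hwX⟩)

theorem of_retraction (π : V → V) (hTS : T ⊆ S) (hπS : ∀ v ∈ S, π v ∈ T)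
    (hπT : ∀ z ∈ T, π z = z)
    (hπ : ∀ u ∈ S, ∀ w ∈ S, π u ≠ π w → c u w = c (π u) (π w))
    (h : HasTwoColoredCut c T) : HasTwoColoredCut c S := by
  obtain ⟨X, hXT, ⟨z, hz⟩, ⟨z', hz'⟩, r, y, hXY⟩ := h
  obtain ⟨hz'T, hz'X⟩ := mem_sdiff.1 hz'
  refine ⟨S.filter (π · ∈ X), filter_subset _ _, ⟨z, mem_filter.2 ⟨hTS (hXT hz), ?_⟩⟩,
    ⟨z', mem_sdiff.2 ⟨hTS hz'T, fun h => hz'X ?_⟩⟩, r, y, fun u hu w hw => ?_⟩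
  · rwa [hπT z (hXT hz)]
  · rw [← hπT z' hz'T]; exact (mem_filter.1 h).2
  obtain ⟨huS, huX⟩ := mem_filter.1 hu
  obtain ⟨hwS, hwX⟩ := mem_sdiff.1 hw
  have hwX' : π w ∉ X := fun h => hwX (mem_filter.2 ⟨hwS, h⟩)
  rw [hπ u huS w hwS fun h => hwX' (h ▸ huX)]
  exact hXY _ huX _ (mem_sdiff.2 ⟨hπS w hwS, hwX'⟩)

theorem of_module (hsym : ∀ a b, c a b = c b a) {E : Finset V} {x : V} (hx : x ∈ E)
    (hES : E ⊆ S) (hE : ∀ v ∈ E, ∀ w ∈ S, w ∉ E → c v w = c x w)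
    (h : HasTwoColoredCut c (insert x (S \ E))) : HasTwoColoredCut c S := by
  refine h.of_retraction (fun v => if v ∈ E then x else v)
    (insert_subset (hES hx) sdiff_subset) (fun v hv => ?_) (fun z hz => ?_) (fun u hu w hw => ?_)
  · split_ifs with hvE
    · exact mem_insert_self x _
    · exact mem_insert_of_mem (mem_sdiff.2 ⟨hv, hvE⟩)
  · rcases mem_insert.1 hz with rfl | hz
    · simp [hx]
    · simp [(mem_sdiff.1 hz).2]
  · split_ifs with huE hwE hwE
    · exact absurd rfl
    · exact fun _ => hE u huE w hw hwE
    · exact fun _ => by rw [hsym, hE w hwE u hu huE, hsym]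
    · exact fun _ => rfl

theorem of_cutVertex (hc : IsGallai c) {x a b : V} {d : β} (hx : x ∈ S)
    (hreach : ∀ v ∈ S, ColorReach c S d x v) (ha : a ∈ S.erase x) (hb : b ∈ S.erase x)
    (hab : ¬ ColorReach c (S.erase x) d a b) : HasTwoColoredCut c S := by
  classical
  set W := S.erase x
  have hWS : W ⊆ S := erase_subset x S
  by_cases hall : ∀ w ∈ W, c x w = d
  · refine ⟨{x}, singleton_subset_iff.2 hx, singleton_nonempty x, ?_, d, d, ?_⟩
    · rw [sdiff_singleton_eq_erase]; exact ⟨a, ha⟩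
    · intro u hu w hw
      rw [mem_singleton.1 hu]
      exact .inl (hall w (by rwa [sdiff_singleton_eq_erase] at hw))
  push Not at hall
  obtain ⟨u, hu, hxu⟩ := hall
  have hstep : ∀ w ∈ W, ∃ v ∈ W, c x v = d ∧ ColorReach c W d v w := fun w hw =>
    (hreach w (hWS hw)).exists_first_step hx (ne_of_mem_erase hw)
  have hout : ∀ w ∈ W, ¬ ColorReach c W d u w → c u w = c x u := by
    intro w hw huw
    obtain ⟨v, hv, hxv, hvw⟩ := hstep w hw
    have huv : ¬ ColorReach c W d u v := fun h => huw (h.trans hvw)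
    have hvu : c v u = c w u := (hvw.symm hc.1).color_eq hc hu fun h => huw (h.symm hc.1)
    have hxuv : c u v = c x u :=
      (hc.eq_or_eq_of_ne (ne_of_mem_erase hu).symm (ne_of_mem_erase hv).symm
        (hxv ▸ hxu)).resolve_right fun h => huv (.single hu hv (h.trans hxv))
    rw [hc.1 u w, ← hvu, hc.1, hxuv]
  obtain ⟨w, hw, huw⟩ : ∃ w ∈ W, ¬ ColorReach c W d u w := by
    by_contra! h
    exact hab (((h a ha).symm hc.1).trans (h b hb))
  refine ⟨W.filter (ColorReach c W d u), (filter_subset _ _).trans hWS,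
    ⟨u, mem_filter.2 ⟨hu, .refl⟩⟩, ⟨x, mem_sdiff.2 ⟨hx, fun h => ?_⟩⟩, d, c x u,
    ?_⟩
  · exact notMem_erase x S (filter_subset _ _ h)
  intro v hv z hz
  obtain ⟨hvW, huv⟩ := mem_filter.1 hv
  by_cases hzx : z = x
  · -- go through a `d`-neighbour `v'` of `x` outside the component of `u`
    obtain ⟨v', hv', hxv', hv'w⟩ := hstep w hw
    have huv' : ¬ ColorReach c W d u v' := fun h => huw (h.trans hv'w)
    have hvv' : c v v' = c x u := (huv.color_eq hc hv' huv').trans (hout v' hv' huv')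
    have hne : c v' x ≠ c v' v := by rw [hc.1 v' x, hxv', hc.1, hvv']; exact hxu.symm
    rw [hzx, hc.1]
    rcases hc.eq_or_eq_of_ne (ne_of_mem_erase hv')
      (fun h => huv' (h ▸ huv)) hne with h | h
    · exact .inl (by rw [h, hc.1, hxv'])
    · exact .inr (by rw [h, hc.1, hvv'])
  · have hzW : z ∈ W := mem_erase.2 ⟨hzx, (mem_sdiff.1 hz).1⟩
    have huz : ¬ ColorReach c W d u z := fun h => (mem_sdiff.1 hz).2 (mem_filter.2 ⟨hzW, h⟩)
    exact .inr ((huv.color_eq hc hzW huz).trans (hout z hzW huz))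

theorem exists_half (hsym : ∀ a b, c a b = c b a) (h : HasTwoColoredCut c S) :
    ∃ v ∈ S, ∃ C ⊆ S, v ∉ C ∧ #S ≤ 2 * #C ∧
      ∃ r y : β, ∀ w ∈ C, c v w = r ∨ c v w = y := by
  obtain ⟨X, hXS, ⟨u, hu⟩, ⟨w, hw⟩, r, y, hXY⟩ := h
  have hcard : #(S \ X) + #X = #S := card_sdiff_add_card_eq_card hXS
  by_cases hX : #S ≤ 2 * #(S \ X)
  · exact ⟨u, hXS hu, S \ X, sdiff_subset, fun h => (mem_sdiff.1 h).2 hu, hX, r, y, hXY u hu⟩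
  · refine ⟨w, (mem_sdiff.1 hw).1, X, hXS, (mem_sdiff.1 hw).2, by omega, r, y, fun v hv => ?_⟩
    rw [hsym]
    exact hXY v hv w hw

end HasTwoColoredCut

theorem IsGallai.hasTwoColoredCut (hc : IsGallai c) {S : Finset V} (hS : 2 ≤ #S) :
    HasTwoColoredCut c S := by
  induction S using Finset.strongInduction with
  | H S ih =>
  obtain ⟨x, hx⟩ := card_pos.1 (by omega : 0 < #S)
  have hW : #(S.erase x) = #S - 1 := card_erase_of_mem hx
  rcases (by omega : #(S.erase x) = 1 ∨ 2 ≤ #(S.erase x)) with hW1 | hW2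
  · obtain ⟨w, hw⟩ := card_eq_one.1 hW1
    refine .of_erase hc.1 (r := c x w) (y := c x w) hx subset_rfl ⟨w, by simp [hw]⟩
      (fun u _ v hv => absurd hv (by simp)) fun a ha => .inl ?_
    rw [hw, mem_singleton] at ha
    rw [ha]
  obtain ⟨X, hXW, ⟨a, ha⟩, ⟨b, hb⟩, r, y, hXY⟩ := ih _ (erase_ssubset hx) hW2
  have hXS : X ⊆ S := hXW.trans (erase_subset x S)
  by_cases hxX : ∀ a ∈ X, c x a = r ∨ c x a = y
  · exact .of_erase hc.1 hx hXW ⟨a, ha⟩ hXY hxX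
  push Not at hxX
  obtain ⟨a, ha, hr, hy⟩ := hxX
  set d := c x a
  -- no `d`-edge crosses the cut `X` of `S.erase x`, since `d ∉ {r, y}`
  have hab : ¬ ColorReach c (S.erase x) d a b := fun h => (mem_sdiff.1 hb).2 <|
    h.mem_of_mem (fun u hu w hw h => (hXY u hu w hw).elim (fun e => hr (h.symm.trans e))
      (fun e => hy (h.symm.trans e))) ha
  by_cases hreach : ∀ v ∈ S, ColorReach c S d x v
  · exact .of_cutVertex hc hx hreach (hXW ha) (mem_sdiff.1 hb).1 hab
  push Not at hreach
  obtain ⟨z, hz, hxz⟩ := hreach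
  classical
  have hxE : x ∈ S.filter (ColorReach c S d x) := mem_filter.2 ⟨hx, .refl⟩
  refine .of_module hc.1 hxE (filter_subset _ _)
    (fun v hv w hw hwE =>
      (mem_filter.1 hv).2.color_eq hc hw fun h => hwE (mem_filter.2 ⟨hw, h⟩))
    (ih _ ?_ ?_)
  · refine ssubset_iff_of_subset (insert_subset hx sdiff_subset) |>.2 ⟨a, hXS ha, ?_⟩
    rw [mem_insert, mem_sdiff, not_or, not_and_not_right]
    exact ⟨ne_of_mem_erase (hXW ha), fun haS => mem_filter.2 ⟨haS, .single hx haS rfl⟩⟩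
  · refine one_lt_card.2
      ⟨x, mem_insert_self x _, z, mem_insert_of_mem (mem_sdiff.2 ⟨hz, ?_⟩), ?_⟩
    · exact fun h => hxz (mem_filter.1 h).2
    · rintro rfl; exact hxz .refl

theorem IsGallai.exists_monochromatic_star [Fintype V] (hc : IsGallai c)
    (hV : 2 ≤ Fintype.card V) :
    ∃ v i, ∃ A : Finset V, v ∉ A ∧ Fintype.card V ≤ 4 * #A ∧
      ∀ a ∈ A, c v a = i := by
  classical
  obtain ⟨v, -, C, -, hvC, hC, r, y, hry⟩ :=
    (hc.hasTwoColoredCut (S := univ) (by rwa [card_univ])).exists_half hc.1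
  rw [card_univ] at hC
  have hsplit : #C ≤ #(C.filter (c v · = r)) + #(C.filter (c v · = y)) :=
    (card_le_card fun w hw => by rcases hry w hw with h | h <;> simp [hw, h]).trans
      (card_union_le _ _)
  by_cases hr : #C ≤ 2 * #(C.filter (c v · = r))
  · exact ⟨v, r, _, fun h => hvC (filter_subset _ _ h), by omega,
      fun a ha => (mem_filter.1 ha).2⟩
  · exact ⟨v, y, _, fun h => hvC (filter_subset _ _ h), by omega,
      fun a ha => (mem_filter.1 ha).2⟩

end TwoColoredCut

def ForcesMultiGallai (k q : ℕ) (P : Finset (Fin k) → ℕ) (n : ℕ) : Prop :=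
  ∀ c : Fin n → Fin n → Fin k, IsGallai c →
    ∃ I : Finset (Fin k), I.Nonempty ∧ I.card ≤ q ∧
      ∃ S : Finset (Fin n), S.card = P I ∧ ∀ a ∈ S, ∀ b ∈ S, a ≠ b → c a b ∈ I

namespace ForcesMultiGallai

variable {k q n : ℕ} {P : Finset (Fin k) → ℕ}

theorem exists_subset {V : Type*} (h : ForcesMultiGallai k q P n) {c : V → V → Fin k}
    (hc : IsGallai c) {A : Finset V} (hA : n ≤ #A) :
    ∃ I : Finset (Fin k), I.Nonempty ∧ #I ≤ q ∧
      ∃ T ⊆ A, #T = P I ∧ ∀ a ∈ T, ∀ b ∈ T, a ≠ b → c a b ∈ I := by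
  obtain ⟨f⟩ : Nonempty (Fin n ↪ A) :=
    Function.Embedding.nonempty_of_card_le (by simpa using hA)
  let g : Fin n ↪ V := f.trans (Function.Embedding.subtype _)
  obtain ⟨I, hI, hIq, T, hT, hTI⟩ := h _ (hc.comp g.injective)
  refine ⟨I, hI, hIq, T.map g, fun v hv => ?_, by rw [card_map, hT], fun a ha b hb hab => ?_⟩
  · obtain ⟨j, -, rfl⟩ := mem_map.1 hv
    exact (f j).2
  · obtain ⟨i, hi, rfl⟩ := mem_map.1 ha
    obtain ⟨j, hj, rfl⟩ := mem_map.1 hb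
    exact hTI i hi j hj fun h => hab (h ▸ rfl)

theorem mono {m : ℕ} (h : ForcesMultiGallai k q P n) (hnm : n ≤ m) :
    ForcesMultiGallai k q P m := fun c hc => by
  obtain ⟨I, hI, hIq, T, -, hT, hTI⟩ := h.exists_subset hc (A := univ) (by simpa)
  exact ⟨I, hI, hIq, T, hT, hTI⟩

theorem of_le {P' : Finset (Fin k) → ℕ} (h : ForcesMultiGallai k q P n)
    (hP : ∀ I, P' I ≤ P I) :
    ForcesMultiGallai k q P' n := fun c hc => by
  obtain ⟨I, hI, hIq, S, hS, hSI⟩ := h c hc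
  obtain ⟨T, hTS, hT⟩ := exists_subset_card_eq (hS ▸ hP I)
  exact ⟨I, hI, hIq, T, hT, fun a ha b hb => hSI a (hTS ha) b (hTS hb)⟩

theorem four_mul {M : ℕ} (hM : 0 < M)
    (h : ∀ i, ForcesMultiGallai k q (fun I => if i ∈ I then P I - 1 else P I) M) :
    ForcesMultiGallai k q P (4 * M) := by
  intro c hc
  obtain ⟨v, i, A, hvA, hA, hAi⟩ := hc.exists_monochromatic_star (by simp; omega)
  obtain ⟨I, hI, hIq, T, hTA, hT, hTI⟩ :=
    (h i).exists_subset hc (A := A) (by rw [Fintype.card_fin] at hA; omega)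
  by_cases hPI : (if i ∈ I then P I - 1 else P I) = P I
  · exact ⟨I, hI, hIq, T, hT.trans hPI, hTI⟩
  have hiI : i ∈ I := by by_contra h; simp [h] at hPI
  rw [if_pos hiI] at hT hPI
  refine ⟨I, hI, hIq, insert v T, ?_, fun a ha b hb hab => ?_⟩
  · rw [card_insert_of_notMem fun h => hvA (hTA h), hT]
    omega
  rcases mem_insert.1 ha with rfl | haT <;> rcases mem_insert.1 hb with rfl | hbT
  · exact absurd rfl hab
  · rwa [hAi b (hTA hbT)]
  · rwa [hc.1, hAi a (hTA haT)]
  · exact hTI a haT b hbT hab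

end ForcesMultiGallai

theorem multiGallaiNum_le_four_mul_general (k q : ℕ) (hq : 1 ≤ q) (hqk : q ≤ k)
    (P : Finset (Fin k) → ℕ) :
    multiGallaiNum k q P ≤ 4 * (Finset.univ.sup fun i : Fin k =>
      multiGallaiNum k q fun I => if i ∈ I then P I - 1 else P I) := by
  let Q (i : Fin k) (I : Finset (Fin k)) : ℕ := if i ∈ I then P I - 1 else P I
  let good (R : Finset (Fin k) → ℕ) : Set ℕ := {n | 0 < n ∧ ForcesMultiGallai k q R n}
  show sInf (good P) ≤ 4 * univ.sup fun i => sInf (good (Q i))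
  by_cases h : ∀ i, (good (Q i)).Nonempty
  · have hN (i : Fin k) : sInf (good (Q i)) ∈ good (Q i) := Nat.sInf_mem (h i)
    have hNM (i : Fin k) : sInf (good (Q i)) ≤ univ.sup fun i => sInf (good (Q i)) :=
      le_sup (f := fun i => sInf (good (Q i))) (mem_univ i)
    have hM := (hN ⟨0, by omega⟩).1.trans_le (hNM _)
    exact Nat.sInf_le ⟨by omega, .four_mul hM fun i => (hN i).2.mono (hNM i)⟩
  · -- no admissible `n` for some `p^{(i)}` leaves none for `p`, and `sInf ∅ = 0`
    obtain ⟨i, hi⟩ := not_forall.1 h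
    have hempty : good P = ∅ := Set.eq_empty_of_forall_notMem fun n ⟨hn, hP⟩ =>
      hi ⟨n, hn, hP.of_le fun I => by dsimp only [Q]; split_ifs <;> omega⟩
    rw [hempty, Nat.sInf_empty]
    exact Nat.zero_le _

theorem multiGallaiNum_le_four_mul (k q : ℕ) (hq : 1 ≤ q) (hqk : q ≤ k)
    (P : Finset (Fin k) → ℕ)
    (hP : ∀ I : Finset (Fin k), I.Nonempty → I.card ≤ q → 0 < P I) :
    multiGallaiNum k q P ≤ 4 * (Finset.univ.sup fun i : Fin k =>
      multiGallaiNum k q fun I => if i ∈ I then P I - 1 else P I) :=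
  multiGallaiNum_le_four_mul_general k q hq hqk P
end

section
/- For all integers m ≥ 2, p with ⌊(p−1)^{1/m}⌋ ≥ 3 (which holds whenever p is sufficiently large compared with m), and k ≥ ⌊(p−1)^{1/m}⌋ − 1, we have g^k_{⌊(p−1)^{1/m}⌋−1}(p) ≥ (k+1)^m + 1; that is, there is a Gallai-k-coloring of the complete graph on (k+1)^m vertices in which every set of p vertices spans edges in at least ⌊(p−1)^{1/m}⌋ colors. -/
open Finset

/-! Words `u ≠ v` of length `m` over the alphabet `{0, …, k}` get the smaller of the two letters
at the first position where they differ. This is a Gallai coloring (an iterated lexicographic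
product of the coloring `min` of `K_{k+1}`) using only the `k` colors below the top letter. A set
of words spanning at most `s` colors has at most `(s + 1) ^ m` elements, by induction on `m`: all
of its first letters except the largest occur as colors, and each first-letter class is a set of
shorter words with no new colors. As `r ^ m ≤ p - 1` for `r = ⌊(p - 1) ^ (1 / m)⌋`, no `p` words
span fewer than `r` colors. That the set defining `gallaiNum` is nonempty is the `k`-color Ramsey
theorem, via the greedy chain argument. -/

section Coloring

variable {V W β γ : Type*}

theorem IsGallai.of_triangle {c : V → V → β} (hsymm : ∀ a b, c a b = c b a)
    (htri : ∀ a b d, c a b = c a d ∨ c a b = c b d ∨ c a d = c b d) : IsGallai c :=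
  ⟨hsymm, fun a b d _ _ _ h => by rcases htri a b d with h' | h' | h' <;> tauto⟩

theorem IsGallai.comp_left {c : V → V → β} (hc : IsGallai c) (f : β → γ) :
    IsGallai fun a b => f (c a b) :=
  ⟨fun a b => congrArg f (hc.1 a b), fun a b d hab had hbd ⟨h₁, h₂, h₃⟩ =>
    hc.2 a b d hab had hbd
      ⟨fun h => h₁ (congrArg f h), fun h => h₂ (congrArg f h), fun h => h₃ (congrArg f h)⟩⟩

theorem IsGallai.comp_right {c : V → V → β} (hc : IsGallai c) {f : W → V}
    (hf : Function.Injective f) : IsGallai fun x y => c (f x) (f y) :=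
  ⟨fun _ _ => hc.1 _ _, fun _ _ _ hab had hbd =>
    hc.2 _ _ _ (hf.ne hab) (hf.ne had) (hf.ne hbd)⟩

variable [DecidableEq V] [DecidableEq β]

theorem mem_colorsOn {c : V → V → β} {S : Finset V} {x : β} :
    x ∈ colorsOn c S ↔ ∃ u ∈ S, ∃ v ∈ S, u ≠ v ∧ c u v = x := by
  simp [colorsOn, and_assoc]

theorem colorsOn_comp_left [DecidableEq γ] (c : V → V → β) (f : β → γ) (S : Finset V) :
    colorsOn (fun a b => f (c a b)) S = (colorsOn c S).image f := by
  rw [colorsOn, colorsOn, image_image]; rfl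

theorem colorsOn_map [DecidableEq W] (c : V → V → β) (f : W ↪ V) (S : Finset W) :
    colorsOn (fun x y => c (f x) (f y)) S = colorsOn c (S.map f) := by
  ext x
  simp only [mem_colorsOn, mem_map, exists_exists_and_eq_and, f.injective.ne_iff]

end Coloring

theorem min_eq_min_or_min_eq_min_or_min_eq_min {α : Type*} [LinearOrder α] (a b d : α) :
    min a b = min a d ∨ min a b = min b d ∨ min a d = min b d := by
  rcases le_total a b with hab | hab <;> rcases le_total a d with had | had <;>
    rcases le_total b d with hbd | hbd <;> simp [*] <;> order

theorem eq_of_apply_zero_eq_of_tail_eq {α : Type*} {m : ℕ} {u v : Fin (m + 1) → α}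
    (h0 : u 0 = v 0) (ht : Fin.tail u = Fin.tail v) : u = v := by
  rw [← Fin.cons_self_tail u, ← Fin.cons_self_tail v, h0, ht]

section LexColor

variable {α : Type*} [LinearOrder α] [Inhabited α]

def lexColor : {m : ℕ} → (Fin m → α) → (Fin m → α) → α
  | 0, _, _ => default
  | _ + 1, u, v => if u 0 = v 0 then lexColor (Fin.tail u) (Fin.tail v) else min (u 0) (v 0)

theorem lexColor_succ {m : ℕ} (u v : Fin (m + 1) → α) :
    lexColor u v = if u 0 = v 0 then lexColor (Fin.tail u) (Fin.tail v) else min (u 0) (v 0) :=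
  rfl

theorem lexColor_comm : ∀ {m : ℕ} (u v : Fin m → α), lexColor u v = lexColor v u
  | 0, _, _ => rfl
  | _ + 1, u, v => by
    simp only [lexColor_succ, eq_comm (a := v 0), lexColor_comm (Fin.tail v), min_comm]

theorem lexColor_triangle : ∀ {m : ℕ} (u v w : Fin m → α),
    lexColor u v = lexColor u w ∨ lexColor u v = lexColor v w ∨ lexColor u w = lexColor v w
  | 0, _, _, _ => Or.inl rfl
  | _ + 1, u, v, w => by
    simp only [lexColor_succ]
    by_cases huv : u 0 = v 0 <;> by_cases huw : u 0 = w 0 <;> by_cases hvw : v 0 = w 0 <;>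
      simp only [huv, huw, hvw, if_true, if_false]
    all_goals first
      | exact lexColor_triangle _ _ _
      | exact min_eq_min_or_min_eq_min_or_min_eq_min _ _ _
      | grind

theorem isGallai_lexColor {m : ℕ} : IsGallai (lexColor : (Fin m → α) → (Fin m → α) → α) :=
  .of_triangle lexColor_comm lexColor_triangle

theorem lexColor_lt_top [OrderTop α] : ∀ {m : ℕ} {u v : Fin m → α}, u ≠ v → lexColor u v < ⊤
  | 0, u, v, h => absurd (Subsingleton.elim u v) h
  | _ + 1, u, v, h => by
    rw [lexColor_succ]
    split_ifs with h0
    · exact lexColor_lt_top fun ht => h (eq_of_apply_zero_eq_of_tail_eq h0 ht)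
    · exact (min_lt_max.mpr h0).trans_le le_top

theorem card_image_apply_zero_le {m : ℕ} (S : Finset (Fin (m + 1) → α)) :
    #(S.image (· 0)) ≤ #(colorsOn lexColor S) + 1 := by
  rcases S.eq_empty_or_nonempty with rfl | hS
  · simp
  set H := S.image (· 0)
  have hH : H.Nonempty := hS.image _
  have hsub : H.erase (H.max' hH) ⊆ colorsOn lexColor S := by
    intro a ha
    obtain ⟨ha_max, haH⟩ := mem_erase.mp ha
    obtain ⟨u, hu, rfl⟩ := mem_image.mp haH
    obtain ⟨v, hv, hv0⟩ := mem_image.mp (H.max'_mem hH)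
    have h0 : u 0 ≠ v 0 := hv0 ▸ ha_max
    refine mem_colorsOn.mpr ⟨u, hu, v, hv, fun h => h0 (h ▸ rfl), ?_⟩
    rw [lexColor_succ, if_neg h0, hv0, min_eq_left (H.le_max' _ haH)]
  have := card_le_card hsub
  rw [card_erase_of_mem (H.max'_mem hH)] at this
  omega

theorem colorsOn_lexColor_image_tail_subset {m : ℕ} (S : Finset (Fin (m + 1) → α)) (a : α) :
    colorsOn lexColor ({u ∈ S | u 0 = a}.image Fin.tail) ⊆ colorsOn lexColor S := by
  intro x hx
  obtain ⟨_, hu', _, hv', hne, rfl⟩ := mem_colorsOn.mp hx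
  obtain ⟨u, hu, rfl⟩ := mem_image.mp hu'
  obtain ⟨v, hv, rfl⟩ := mem_image.mp hv'
  rw [mem_filter] at hu hv
  refine mem_colorsOn.mpr ⟨u, hu.1, v, hv.1, fun h => hne (h ▸ rfl), ?_⟩
  rw [lexColor_succ, if_pos (hu.2.trans hv.2.symm)]

theorem card_le_of_card_colorsOn_lexColor_le :
    ∀ {m : ℕ} (S : Finset (Fin m → α)) {s : ℕ}, #(colorsOn lexColor S) ≤ s → #S ≤ (s + 1) ^ m
  | 0, S, s, _ => by simpa using card_le_univ S
  | m + 1, S, s, hS => by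
    have hfiber : ∀ a ∈ S.image (· 0), #{u ∈ S | u 0 = a} ≤ (s + 1) ^ m := fun a _ => by
      rw [← card_image_of_injOn fun u hu v hv ht =>
        eq_of_apply_zero_eq_of_tail_eq ((mem_filter.mp hu).2.trans (mem_filter.mp hv).2.symm) ht]
      exact card_le_of_card_colorsOn_lexColor_le _
        ((card_le_card (colorsOn_lexColor_image_tail_subset S a)).trans hS)
    calc #S ≤ (s + 1) ^ m * #(S.image (· 0)) := card_le_mul_card_image S _ hfiber
      _ ≤ (s + 1) ^ m * (s + 1) := by gcongr; exact (card_image_apply_zero_le S).trans (by omega)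
      _ = (s + 1) ^ (m + 1) := (pow_succ _ _).symm

end LexColor

theorem exists_isGallai_card_le_pow (k m : ℕ) (hk : 0 < k) :
    ∃ c : Fin ((k + 1) ^ m) → Fin ((k + 1) ^ m) → Fin k, IsGallai c ∧
      ∀ (S : Finset (Fin ((k + 1) ^ m))) (s : ℕ), #(colorsOn c S) ≤ s → #S ≤ (s + 1) ^ m := by
  obtain ⟨j, rfl⟩ : ∃ j, k = j + 1 := ⟨k - 1, by omega⟩
  let e : Fin ((j + 1 + 1) ^ m) ≃ (Fin m → Fin (j + 1 + 1)) := finFunctionFinEquiv.symm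
  let squeeze : Fin (j + 1 + 1) → Fin (j + 1) := fun a => ⟨min a j, by omega⟩
  refine ⟨fun x y => squeeze (lexColor (e x) (e y)),
    (isGallai_lexColor.comp_right e.injective).comp_left squeeze, fun S s hS => ?_⟩
  -- `squeeze` only merges the top letter, which is never a color
  have hinj : Set.InjOn squeeze (colorsOn lexColor (S.map e.toEmbedding)) := by
    intro a ha b hb hab
    obtain ⟨_, -, _, -, hne, rfl⟩ := mem_colorsOn.mp ha
    obtain ⟨_, -, _, -, hne', rfl⟩ := mem_colorsOn.mp hb
    have := Fin.lt_def.mp (lexColor_lt_top hne)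
    have := Fin.lt_def.mp (lexColor_lt_top hne')
    simp only [squeeze, Fin.mk.injEq, Fin.top_eq_last, Fin.val_last] at hab this
    exact Fin.ext (by omega)
  have hmap : colorsOn (fun x y => lexColor (e x) (e y)) S
      = colorsOn lexColor (S.map e.toEmbedding) := colorsOn_map lexColor e.toEmbedding S
  rw [colorsOn_comp_left, hmap, card_image_of_injOn hinj] at hS
  simpa using card_le_of_card_colorsOn_lexColor_le _ hS

section Ramsey

variable {V β : Type*} [DecidableEq V] [Fintype β] [DecidableEq β]

theorem exists_chain_of_pow_le_card (c : V → V → β) :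
    ∀ (L : ℕ) (W : Finset V), (Fintype.card β + 1) ^ L ≤ #W →
      ∃ (f : Fin L ↪ V) (g : Fin L → β), (∀ i, f i ∈ W) ∧ ∀ i j, i < j → c (f i) (f j) = g i
  | 0, _, _ => ⟨⟨Fin.elim0, fun i => i.elim0⟩, Fin.elim0, fun i => i.elim0, fun i => i.elim0⟩
  | L + 1, W, hW => by
    set K := Fintype.card β
    obtain ⟨v, hv⟩ : W.Nonempty := card_pos.mp (lt_of_lt_of_le (by positivity) hW)
    have hcount : K * (K + 1) ^ L ≤ #(W.erase v) := by
      have : (K + 1) ^ (L + 1) = K * (K + 1) ^ L + (K + 1) ^ L := by ring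
      have : 0 < (K + 1) ^ L := by positivity
      rw [card_erase_of_mem hv]
      omega
    obtain ⟨b, -, hb⟩ := exists_le_card_fiber_of_mul_le_card_of_maps_to (t := univ) (f := c v)
      (fun _ _ => mem_univ _) ⟨c v v, mem_univ _⟩ (by rwa [card_univ])
    obtain ⟨f, g, hfW, hfg⟩ := exists_chain_of_pow_le_card c L _ hb
    have hf : ∀ i, f i ∈ W.erase v ∧ c v (f i) = b := fun i => mem_filter.mp (hfW i)
    refine ⟨⟨Fin.cons v f, Fin.cons_injective_iff.mpr
        ⟨fun ⟨i, hi⟩ => (mem_erase.mp (hf i).1).1 hi, f.injective⟩⟩,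
      Fin.cons b g, Fin.cases hv fun i => mem_of_mem_erase (hf i).1, ?_⟩
    intro i j hij
    induction j using Fin.cases with
    | zero => exact absurd hij (Fin.not_lt_zero i)
    | succ j =>
      induction i using Fin.cases with
      | zero => exact (hf j).2
      | succ i => exact hfg i j (Fin.succ_lt_succ_iff.mp hij)

theorem exists_card_eq_card_colorsOn_le_one [Fintype V] (c : V → V → β)
    (hc : ∀ a b, c a b = c b a) (p : ℕ)
    (hV : (Fintype.card β + 1) ^ (Fintype.card β * p + 1) ≤ Fintype.card V) :
    ∃ S : Finset V, #S = p ∧ #(colorsOn c S) ≤ 1 := by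
  obtain ⟨f, g, -, hfg⟩ := exists_chain_of_pow_le_card c _ univ hV
  obtain ⟨b, -, hb⟩ := exists_le_card_fiber_of_mul_le_card_of_maps_to (s := univ) (t := univ)
    (f := g) (n := p) (fun _ _ => mem_univ _) ⟨g 0, mem_univ _⟩
    (by simp only [card_univ, Fintype.card_fin]; omega)
  obtain ⟨A, hA, hAp⟩ := exists_subset_card_eq hb
  have hAb : ∀ i ∈ A, g i = b := fun i hi => (mem_filter.mp (hA hi)).2
  have hsub : colorsOn c (A.map f) ⊆ {b} := by
    intro x hx
    obtain ⟨_, hfi, _, hfj, hij, rfl⟩ := mem_colorsOn.mp hx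
    obtain ⟨i, hi, rfl⟩ := mem_map.mp hfi
    obtain ⟨j, hj, rfl⟩ := mem_map.mp hfj
    rcases (f.injective.ne_iff.mp hij).lt_or_gt with h | h
    · rw [hfg i j h, hAb i hi, mem_singleton]
    · rw [hc, hfg j i h, hAb j hj, mem_singleton]
  exact ⟨A.map f, (card_map f).trans hAp, (card_le_card hsub).trans (card_singleton b).le⟩

end Ramsey

theorem lt_gallaiNum {k q p N : ℕ} (hq : 1 ≤ q) (c : Fin N → Fin N → Fin k) (hc : IsGallai c)
    (hcS : ∀ S : Finset (Fin N), #S = p → q < #(colorsOn c S)) : N < gallaiNum k q p := by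
  refine Nat.lt_of_succ_le (le_csInf ?_ ?_)
  · refine ⟨(k + 1) ^ (k * p + 1), by positivity, fun c' hc' => ?_⟩
    obtain ⟨S, hS, hS1⟩ := exists_card_eq_card_colorsOn_le_one c' hc'.1 p (by simp)
    exact ⟨S, hS, hS1.trans hq⟩
  · rintro n ⟨-, hn⟩
    by_contra! hnN
    let f := Fin.castLEEmb (Nat.le_of_lt_succ hnN)
    obtain ⟨S, hS, hSq⟩ := hn _ (hc.comp_right f.injective)
    rw [colorsOn_map c f] at hSq
    exact (hcS (S.map f) (by rw [card_map, hS])).not_ge hSq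

theorem floor_rpow_one_div_pow_lt {m p : ℕ} (hr : 2 ≤ ⌊((p : ℝ) - 1) ^ ((1 : ℝ) / m)⌋₊) :
    ⌊((p : ℝ) - 1) ^ ((1 : ℝ) / m)⌋₊ ^ m < p := by
  set r := ⌊((p : ℝ) - 1) ^ ((1 : ℝ) / m)⌋₊
  have hm : m ≠ 0 := by rintro rfl; simp [r] at hr
  -- for `p = 0` the base is negative and `Real.rpow` is junk, but still bounded by `|x| ^ y`
  have hle : (r : ℝ) ^ m ≤ |(p : ℝ) - 1| := calc
    (r : ℝ) ^ m ≤ (|(p : ℝ) - 1| ^ ((1 : ℝ) / m)) ^ m := by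
      gcongr
      exact (Nat.floor_le (zero_le_one.trans (Nat.floor_pos.mp (by omega)))).trans
        ((le_abs_self _).trans (Real.abs_rpow_le_abs_rpow _ _))
    _ = |(p : ℝ) - 1| := by
      rw [← Real.rpow_natCast, ← Real.rpow_mul (abs_nonneg _),
        one_div_mul_cancel (Nat.cast_ne_zero.mpr hm), Real.rpow_one]
  have h2 : (2 : ℝ) ≤ (r : ℝ) ^ m := by exact_mod_cast hr.trans (Nat.le_self_pow hm r)
  have hp : (1 : ℝ) ≤ p := by
    by_contra! hp
    rw [Nat.cast_lt_one.mp hp] at hle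
    norm_num at hle
    linarith
  rw [abs_of_nonneg (by linarith)] at hle
  exact_mod_cast (by push_cast; linarith : ((r ^ m : ℕ) : ℝ) < p)

theorem gallaiNum_mth_root_lower_general (m p k : ℕ)
    (hr : 3 ≤ ⌊((p : ℝ) - 1) ^ ((1 : ℝ) / (m : ℝ))⌋₊)
    (hk : ⌊((p : ℝ) - 1) ^ ((1 : ℝ) / (m : ℝ))⌋₊ - 1 ≤ k) :
    (k + 1) ^ m + 1 ≤ gallaiNum k (⌊((p : ℝ) - 1) ^ ((1 : ℝ) / (m : ℝ))⌋₊ - 1) p ∧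
    ∃ c : Fin ((k + 1) ^ m) → Fin ((k + 1) ^ m) → Fin k, IsGallai c ∧
      ∀ S : Finset (Fin ((k + 1) ^ m)), S.card = p →
        ⌊((p : ℝ) - 1) ^ ((1 : ℝ) / (m : ℝ))⌋₊ ≤ (colorsOn c S).card := by
  have hrp := floor_rpow_one_div_pow_lt (by omega : 2 ≤ ⌊((p : ℝ) - 1) ^ ((1 : ℝ) / m)⌋₊)
  generalize ⌊((p : ℝ) - 1) ^ ((1 : ℝ) / (m : ℝ))⌋₊ = r at hr hk hrp ⊢
  obtain ⟨c, hc, hcard⟩ := exists_isGallai_card_le_pow k m (by omega)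
  have hmany : ∀ S : Finset (Fin ((k + 1) ^ m)), #S = p → r - 1 < #(colorsOn c S) := by
    intro S hS
    by_contra! hfew
    have := hcard S (r - 1) hfew
    rw [Nat.sub_add_cancel (by omega)] at this
    omega
  exact ⟨lt_gallaiNum (by omega) c hc hmany, c, hc, fun S hS => by have := hmany S hS; omega⟩

theorem gallaiNum_mth_root_lower (m p k : ℕ) (hm : 2 ≤ m)
    (hr : 3 ≤ ⌊((p : ℝ) - 1) ^ ((1 : ℝ) / (m : ℝ))⌋₊)
    (hk : ⌊((p : ℝ) - 1) ^ ((1 : ℝ) / (m : ℝ))⌋₊ - 1 ≤ k) :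
    (k + 1) ^ m + 1 ≤ gallaiNum k (⌊((p : ℝ) - 1) ^ ((1 : ℝ) / (m : ℝ))⌋₊ - 1) p ∧
    ∃ c : Fin ((k + 1) ^ m) → Fin ((k + 1) ^ m) → Fin k, IsGallai c ∧
      ∀ S : Finset (Fin ((k + 1) ^ m)), S.card = p →
        ⌊((p : ℝ) - 1) ^ ((1 : ℝ) / (m : ℝ))⌋₊ ≤ (colorsOn c S).card :=
  gallaiNum_mth_root_lower_general m p k hr hk
end

section
/- For all integers c ≥ 1 and n ≥ 2(7+c)^c, in every exact Gallai-(n−c)-coloring of the complete graph K_n the number of colors each of which induces a star is at least n/(7+c)^c. -/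
open Finset

/-- Color `i` induces a star: some edge has color `i`, and all edges of color `i`
share a common vertex. -/
def inducesStar {V β : Type*} (c : V → V → β) (i : β) : Prop :=
  (∃ a b, a ≠ b ∧ c a b = i) ∧ ∃ v, ∀ a b, a ≠ b → c a b = i → a = v ∨ b = v

section Aux

open scoped Classical

variable {n k : ℕ}

/-- Colors which induce a star inside `S`. -/
noncomputable def starOn (col : Fin n → Fin n → Fin k) (S : Finset (Fin n)) : Finset (Fin k) :=
  (colorsOn col S).filter fun i =>
    ∃ v ∈ S, ∀ a ∈ S, ∀ b ∈ S, a ≠ b → col a b = i → a = v ∨ b = v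

lemma mem_colorsOn_s16 {col : Fin n → Fin n → Fin k} {S : Finset (Fin n)} {i : Fin k} :
    i ∈ colorsOn col S ↔ ∃ a ∈ S, ∃ b ∈ S, a ≠ b ∧ col a b = i := by
  constructor
  · intro h
    simp only [colorsOn, mem_image, mem_filter, mem_product] at h
    obtain ⟨p, ⟨⟨h1, h2⟩, h3⟩, h4⟩ := h
    exact ⟨p.1, h1, p.2, h2, h3, h4⟩
  · rintro ⟨a, ha, b, hb, hab, h⟩
    simp only [colorsOn, mem_image, mem_filter, mem_product]
    exact ⟨(a, b), ⟨⟨ha, hb⟩, hab⟩, h⟩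

lemma colorsOn_mono {col : Fin n → Fin n → Fin k} {S T : Finset (Fin n)} (h : S ⊆ T) :
    colorsOn col S ⊆ colorsOn col T := by
  intro i hi
  rw [mem_colorsOn_s16] at hi ⊢
  obtain ⟨a, ha, b, hb, hab, hc⟩ := hi
  exact ⟨a, h ha, b, h hb, hab, hc⟩

lemma mem_starOn {col : Fin n → Fin n → Fin k} {S : Finset (Fin n)} {i : Fin k} :
    i ∈ starOn col S ↔ i ∈ colorsOn col S ∧
      ∃ v ∈ S, ∀ a ∈ S, ∀ b ∈ S, a ≠ b → col a b = i → a = v ∨ b = v :=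
  mem_filter

variable {col : Fin n → Fin n → Fin k}

lemma gallai_two (hg : IsGallai col) {a b d : Fin n} (hab : a ≠ b) (had : a ≠ d) (hbd : b ≠ d)
    (hne : col a b ≠ col a d) : col b d = col a b ∨ col b d = col a d := by
  have h := hg.2 a b d hab had hbd
  by_contra hcon
  push_neg at hcon
  exact h ⟨hne, fun e => hcon.1 e.symm, fun e => hcon.2 e.symm⟩

/-- If color `i` is present on `S` but not on `S.erase v`, it has an edge from `v`. -/
lemma lost_neighbor (hg : IsGallai col) {S : Finset (Fin n)} {v : Fin n}
    {i : Fin k} (hi : i ∈ colorsOn col S) (hlost : i ∉ colorsOn col (S.erase v)) :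
    ∃ p ∈ S, p ≠ v ∧ col v p = i := by
  rw [mem_colorsOn_s16] at hi
  obtain ⟨a, ha, b, hb, hab, hc⟩ := hi
  by_cases hav : a = v
  · subst hav
    exact ⟨b, hb, Ne.symm hab, hc⟩
  · by_cases hbv : b = v
    · subst hbv
      exact ⟨a, ha, hav, by rw [hg.1 b a]; exact hc⟩
    · exact absurd (mem_colorsOn_s16.mpr
        ⟨a, mem_erase.mpr ⟨hav, ha⟩, b, mem_erase.mpr ⟨hbv, hb⟩, hab, hc⟩) hlost

/-- At most one color can be lost when deleting a vertex. -/
lemma lost_unique (hg : IsGallai col) {S : Finset (Fin n)} {v : Fin n}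
    {x y : Fin k} (hx : x ∈ colorsOn col S) (hx' : x ∉ colorsOn col (S.erase v))
    (hy : y ∈ colorsOn col S) (hy' : y ∉ colorsOn col (S.erase v)) : x = y := by
  by_contra hxy
  obtain ⟨p, hp, hpv, hcp⟩ := lost_neighbor hg hx hx'
  obtain ⟨q, hq, hqv, hcq⟩ := lost_neighbor hg hy hy'
  have hpq : p ≠ q := fun h => hxy (by rw [← hcp, h, hcq])
  have h2 := gallai_two hg (Ne.symm hpv) (Ne.symm hqv) hpq
    (by rw [hcp, hcq]; exact hxy)
  rcases h2 with h | h
  · exact hx' (mem_colorsOn_s16.mpr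
      ⟨p, mem_erase.mpr ⟨hpv, hp⟩, q, mem_erase.mpr ⟨hqv, hq⟩, hpq, by rw [h, hcp]⟩)
  · exact hy' (mem_colorsOn_s16.mpr
      ⟨p, mem_erase.mpr ⟨hpv, hp⟩, q, mem_erase.mpr ⟨hqv, hq⟩, hpq, by rw [h, hcq]⟩)

/-- A Gallai coloring of `K_m` uses fewer than `m` colors. -/
lemma colorsOn_card_lt (hg : IsGallai col) :
    ∀ S : Finset (Fin n), S.Nonempty → (colorsOn col S).card < S.card := by
  intro S
  induction S using Finset.strongInduction with
  | _ S ih =>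
    intro hS
    obtain ⟨v, hv⟩ := hS
    by_cases hone : S.card ≤ 1
    · have hempty : colorsOn col S = ∅ := by
        apply Finset.eq_empty_of_forall_notMem
        intro i hi
        rw [mem_colorsOn_s16] at hi
        obtain ⟨a, ha, b, hb, hab, _⟩ := hi
        exact hab (Finset.card_le_one.mp hone a ha b hb)
      rw [hempty]
      simpa using Finset.card_pos.mpr ⟨v, hv⟩
    · push_neg at hone
      set S' := S.erase v with hS'def
      have hss : S' ⊂ S := Finset.erase_ssubset hv
      have hS'ne : S'.Nonempty := by
        obtain ⟨b, hb, hbv⟩ := Finset.exists_mem_ne hone v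
        exact ⟨b, mem_erase.mpr ⟨hbv, hb⟩⟩
      have hIH : (colorsOn col S').card < S'.card := ih S' hss hS'ne
      have hcardS' : S'.card < S.card := Finset.card_lt_card hss
      by_cases hsub : colorsOn col S ⊆ colorsOn col S'
      · have := Finset.card_le_card hsub
        omega
      · obtain ⟨x, hxS, hxn⟩ := Finset.not_subset.mp hsub
        have hsub2 : colorsOn col S ⊆ insert x (colorsOn col S') := by
          intro y hy
          by_cases hy' : y ∈ colorsOn col S'
          · exact mem_insert_of_mem hy'
          · rw [mem_insert]
            exact Or.inl (lost_unique hg hy hy' hxS hxn)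
        have h1 := Finset.card_le_card hsub2
        have h2 := Finset.card_insert_le x (colorsOn col S')
        omega

/-- Deleting a vertex destroys at most 3 star colors. -/
lemma star_loss (hg : IsGallai col) {S : Finset (Fin n)} {v : Fin n} (hv : v ∈ S) :
    (starOn col (S.erase v)).card ≤ (starOn col S).card + 3 := by
  set S' := S.erase v with hS'def
  set B : Finset (Fin k) := starOn col S' \ starOn col S with hBdef
  have hcover : starOn col S' ⊆ starOn col S ∪ B := by
    intro j hj
    by_cases h : j ∈ starOn col S
    · exact mem_union_left _ h
    · exact mem_union_right _ (mem_sdiff.mpr ⟨hj, h⟩)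
  have hBcard : B.card ≤ 3 := by
    -- choice of witnesses for each j ∈ B
    have hkey : ∀ j : Fin k, ∃ x w : Fin n, j ∈ B →
        (x ∈ S ∧ x ≠ v ∧ x ≠ w ∧ col v x = j ∧ w ∈ S' ∧
          (∀ a ∈ S', ∀ b ∈ S', a ≠ b → col a b = j → a = w ∨ b = w)) := by
      intro j
      by_cases hj : j ∈ B
      · have hj' := (mem_sdiff.mp hj).1
        have hjnot := (mem_sdiff.mp hj).2
        rw [mem_starOn] at hj'
        obtain ⟨w, hwS', hcent⟩ := hj'.2
        have hjc : j ∈ colorsOn col S := colorsOn_mono (Finset.erase_subset v S) hj'.1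
        -- w is not a center on S
        rw [mem_starOn] at hjnot
        push_neg at hjnot
        have hwS : w ∈ S := (mem_erase.mp hwS').2
        obtain ⟨a, ha, b, hb, hab, hcab, haw, hbw⟩ := by
          have := hjnot hjc w hwS
          exact this
        -- one of a, b must be v
        have hav : a = v ∨ b = v := by
          by_contra hcon
          push_neg at hcon
          have haS' : a ∈ S' := mem_erase.mpr ⟨hcon.1, ha⟩
          have hbS' : b ∈ S' := mem_erase.mpr ⟨hcon.2, hb⟩
          rcases hcent a haS' b hbS' hab hcab with h | h
          · exact haw h
          · exact hbw h
        rcases hav with hav | hbv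
        · subst hav
          exact ⟨b, w, fun _ => ⟨hb, Ne.symm hab, hbw, hcab, hwS', hcent⟩⟩
        · subst hbv
          refine ⟨a, w, fun _ => ⟨ha, hab, haw, ?_, hwS', hcent⟩⟩
          rw [hg.1 b a]; exact hcab
      · exact ⟨v, v, fun h => absurd h hj⟩
    choose x w hxw using hkey
    have hxinj : ∀ j ∈ B, ∀ l ∈ B, x j = x l → j = l := by
      intro j hj l hl hxl
      have h1 := (hxw j hj).2.2.2.1
      have h2 := (hxw l hl).2.2.2.1
      rw [← h1, ← h2, hxl]
    have hpair : ∀ j ∈ B, ∀ l ∈ B, j ≠ l → x l = w j ∨ x j = w l := by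
      intro j hj l hl hjl
      obtain ⟨hxS, hxv, hxwne, hcolx, hwS', hcent⟩ := hxw j hj
      obtain ⟨hxS2, hxv2, hxwne2, hcolx2, hwS'2, hcent2⟩ := hxw l hl
      have hxx : x j ≠ x l := by
        intro h
        exact hjl (hxinj j hj l hl h)
      have h2 := gallai_two hg (Ne.symm hxv) (Ne.symm hxv2) hxx
        (by rw [hcolx, hcolx2]; exact hjl)
      have hjS' : x j ∈ S.erase v := mem_erase.mpr ⟨hxv, hxS⟩
      have hlS' : x l ∈ S.erase v := mem_erase.mpr ⟨hxv2, hxS2⟩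
      rcases h2 with h | h
      · -- col (x j) (x l) = col v (x j) = j : an edge of color j in S'
        have : col (x j) (x l) = j := by rw [h, hcolx]
        rcases hcent (x j) hjS' (x l) hlS' hxx this with hh | hh
        · exact absurd hh hxwne
        · exact Or.inl hh
      · have : col (x j) (x l) = l := by rw [h, hcolx2]
        rcases hcent2 (x j) hjS' (x l) hlS' hxx this with hh | hh
        · exact Or.inr hh
        · exact absurd hh hxwne2
    rcases B.eq_empty_or_nonempty with hBe | hBne
    · rw [hBe]; simp
    · obtain ⟨j0, hj0⟩ := hBne
      set Q : Finset (Fin k) := B.filter fun l => x l = w j0 with hQdef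
      set P : Finset (Fin k) := B.filter fun l => l ≠ j0 ∧ x j0 = w l with hPdef
      have hcov2 : B ⊆ insert j0 (Q ∪ P) := by
        intro l hl
        by_cases h0 : l = j0
        · rw [h0]; exact mem_insert_self _ _
        · rcases hpair j0 hj0 l hl (fun h => h0 h.symm) with h | h
          · exact mem_insert_of_mem (mem_union_left _ (mem_filter.mpr ⟨hl, h⟩))
          · exact mem_insert_of_mem (mem_union_right _ (mem_filter.mpr ⟨hl, h0, h⟩))
      have hQ1 : Q.card ≤ 1 := by
        rw [Finset.card_le_one]
        intro a ha b hb
        have ha' := mem_filter.mp ha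
        have hb' := mem_filter.mp hb
        exact hxinj a ha'.1 b hb'.1 (by rw [ha'.2, hb'.2])
      have hP1 : P.card ≤ 1 := by
        rw [Finset.card_le_one]
        intro l1 hl1 l2 hl2
        have h1 := mem_filter.mp hl1
        have h2 := mem_filter.mp hl2
        by_contra hne
        rcases hpair l1 h1.1 l2 h2.1 hne with h | h
        · -- x l2 = w l1 = x j0, so l2 = j0, contradiction
          have : x l2 = x j0 := by rw [h, ← h1.2.2]
          exact h2.2.1 (hxinj l2 h2.1 j0 hj0 this)
        · have : x l1 = x j0 := by rw [h, ← h2.2.2]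
          exact h1.2.1 (hxinj l1 h1.1 j0 hj0 this)
      have hc1 := Finset.card_le_card hcov2
      have hc2 := Finset.card_insert_le j0 (Q ∪ P)
      have hc3 := Finset.card_union_le Q P
      omega
  have h1 := Finset.card_le_card hcover
  have h2 := Finset.card_union_le (starOn col S) B
  omega

/-- Main induction: `8·#colors(S) ≤ 2·#stars(S) + 7·(|S|−1)`. -/
lemma main_bound (hg : IsGallai col) :
    ∀ S : Finset (Fin n),
      8 * (colorsOn col S).card ≤ 2 * (starOn col S).card + 7 * (S.card - 1) := by
  intro S
  induction S using Finset.strongInduction with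
  | _ S ih =>
    by_cases hone : S.card ≤ 1
    · have hempty : colorsOn col S = ∅ := by
        apply Finset.eq_empty_of_forall_notMem
        intro i hi
        rw [mem_colorsOn_s16] at hi
        obtain ⟨a, ha, b, hb, hab, _⟩ := hi
        exact hab (Finset.card_le_one.mp hone a ha b hb)
      rw [hempty]
      simp
    · push_neg at hone
      by_cases hA : ∀ v ∈ S, ∃ i, i ∈ colorsOn col S ∧
          ∀ a ∈ S, ∀ b ∈ S, a ≠ b → col a b = i → a = v ∨ b = v
      · -- every vertex has a "unique" color; all of them are stars
        obtain ⟨a0, ha0, b0, hb0, hab0⟩ := Finset.one_lt_card.mp hone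
        have hk : 0 < k := (col a0 b0).pos
        have hchoice : ∀ v : Fin n, ∃ i : Fin k, v ∈ S →
            (i ∈ colorsOn col S ∧
              ∀ a ∈ S, ∀ b ∈ S, a ≠ b → col a b = i → a = v ∨ b = v) := by
          intro v
          by_cases hv : v ∈ S
          · obtain ⟨i, hi⟩ := hA v hv
            exact ⟨i, fun _ => hi⟩
          · exact ⟨⟨0, hk⟩, fun h => absurd h hv⟩
        choose f hf using hchoice
        have himg : S.image f ⊆ starOn col S := by
          intro i hi
          obtain ⟨v, hv, hfv⟩ := mem_image.mp hi
          obtain ⟨h1, h2⟩ := hf v hv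
          rw [← hfv] at *
          exact mem_starOn.mpr ⟨h1, v, hv, h2⟩
        have hfib : ∀ i ∈ S.image f, (S.filter fun v => f v = i).card ≤ 2 := by
          intro i hi
          by_contra hcon
          push_neg at hcon
          obtain ⟨v1, v2, v3, h1, h2, h3, h12, h13, h23⟩ :=
            Finset.two_lt_card_iff.mp hcon
          have hm1 := mem_filter.mp h1
          have hm2 := mem_filter.mp h2
          have hm3 := mem_filter.mp h3
          obtain ⟨hpres, hcent1⟩ := hf v1 hm1.1
          have hcent2 := (hf v2 hm2.1).2
          have hcent3 := (hf v3 hm3.1).2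
          rw [hm1.2] at hpres hcent1
          rw [hm2.2] at hcent2
          rw [hm3.2] at hcent3
          obtain ⟨a, ha, b, hb, hab, hcab⟩ := mem_colorsOn_s16.mp hpres
          rcases hcent1 a ha b hb hab hcab with e1 | e1 <;>
            rcases hcent2 a ha b hb hab hcab with e2 | e2 <;>
              rcases hcent3 a ha b hb hab hcab with e3 | e3 <;>
                subst_vars <;>
                first
                  | exact h12 rfl
                  | exact h13 rfl
                  | exact h23 rfl
                  | exact hab rfl
        have hcard : S.card ≤ 2 * (S.image f).card := by
          have heq : S.card = ∑ i ∈ S.image f, (S.filter fun v => f v = i).card :=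
            Finset.card_eq_sum_card_fiberwise fun v hv => Finset.mem_image_of_mem f hv
          have hle : ∑ i ∈ S.image f, (S.filter fun v => f v = i).card ≤
              ∑ _i ∈ S.image f, 2 := Finset.sum_le_sum hfib
          rw [Finset.sum_const, smul_eq_mul] at hle
          omega
        have h1 : (colorsOn col S).card < S.card :=
          colorsOn_card_lt hg S ⟨a0, ha0⟩
        have h2 : (S.image f).card ≤ (starOn col S).card := Finset.card_le_card himg
        omega
      · -- some vertex has no unique color; delete it
        push_neg at hA
        obtain ⟨v, hv, hnon⟩ := hA
        set S' := S.erase v with hS'def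
        have hss : S' ⊂ S := Finset.erase_ssubset hv
        have hts : colorsOn col S ⊆ colorsOn col S' := by
          intro i hi
          obtain ⟨a, ha, b, hb, hab, hcab, hav, hbv⟩ := hnon i hi
          exact mem_colorsOn_s16.mpr
            ⟨a, mem_erase.mpr ⟨hav, ha⟩, b, mem_erase.mpr ⟨hbv, hb⟩, hab, hcab⟩
        have hstars := star_loss hg hv
        rw [← hS'def] at hstars
        have hIH := ih S' hss
        have hcardS' : S'.card = S.card - 1 := Finset.card_erase_of_mem hv
        have hle := Finset.card_le_card hts
        omega

end Aux

theorem star_colors_of_exact_gallai_general (c n : ℕ) (hc : 1 ≤ c)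
    (hn : 2 * (7 + c) ^ c ≤ n)
    (col : Fin n → Fin n → Fin (n - c)) (hg : IsGallai col)
    (hexact : ∀ i : Fin (n - c), ∃ a b : Fin n, a ≠ b ∧ col a b = i) :
    (n : ℝ) / (7 + (c : ℝ)) ^ c ≤ ({i : Fin (n - c) | inducesStar col i}.ncard : ℝ) := by
  classical
  -- numeric facts about (7+c)^c
  have h8 : 8 ≤ (7 + c) ^ c := by
    calc 8 ≤ 7 + c := by omega
    _ ≤ (7 + c) ^ c := Nat.le_self_pow (by omega) _
  have h8c : 8 * c ≤ (7 + c) ^ c := by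
    rcases Nat.lt_or_ge c 2 with h | h
    · interval_cases c
      · norm_num
    · calc 8 * c ≤ (7 + c) ^ 2 := by nlinarith
      _ ≤ (7 + c) ^ c := Nat.pow_le_pow_right (by omega) h
  have hcn : c < n := by omega
  have hn1 : 1 ≤ n := by omega
  -- all colors are present
  have hcolall : colorsOn col (univ : Finset (Fin n)) = univ := by
    apply Finset.eq_univ_of_forall
    intro i
    obtain ⟨a, b, hab, hcab⟩ := hexact i
    exact mem_colorsOn_s16.mpr ⟨a, mem_univ a, b, mem_univ b, hab, hcab⟩
  have hmain := main_bound hg (univ : Finset (Fin n))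
  rw [hcolall] at hmain
  rw [Finset.card_univ, Finset.card_univ, Fintype.card_fin, Fintype.card_fin] at hmain
  -- hmain : 8 * (n - c) ≤ 2 * (starOn col univ).card + 7 * (n - 1)
  set s := (starOn col (univ : Finset (Fin n))).card with hsdef
  have hsub : (↑(starOn col (univ : Finset (Fin n))) : Set (Fin (n - c))) ⊆
      {i : Fin (n - c) | inducesStar col i} := by
    intro i hi
    simp only [Finset.coe_sort_coe, Finset.mem_coe] at hi
    obtain ⟨hpres, v, _, hcent⟩ := mem_starOn.mp hi
    obtain ⟨a, _, b, _, hab, hcab⟩ := mem_colorsOn_s16.mp hpres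
    refine ⟨⟨a, b, hab, hcab⟩, v, fun a b hab hcab => ?_⟩
    exact hcent a (mem_univ a) b (mem_univ b) hab hcab
  have hncard : (s : ℝ) ≤ ({i : Fin (n - c) | inducesStar col i}.ncard : ℝ) := by
    have := Set.ncard_le_ncard hsub (Set.toFinite _)
    rw [Set.ncard_coe_finset] at this
    exact_mod_cast this
  -- final arithmetic over ℝ
  have hpos : (0:ℝ) < (7 + (c:ℝ)) ^ c := by positivity
  rw [div_le_iff₀ hpos]
  have hH : ((((7 + c) ^ c : ℕ)) : ℝ) = (7 + (c:ℝ)) ^ c := by push_cast; ring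
  set H : ℝ := (7 + (c:ℝ)) ^ c with hHdef
  have hHn : 2 * H ≤ (n : ℝ) := by
    rw [← hH]
    exact_mod_cast hn
  have hH8 : (8:ℝ) ≤ H := by
    rw [← hH]; exact_mod_cast h8
  have hH8c : 8 * (c:ℝ) ≤ H := by
    rw [← hH]; exact_mod_cast h8c
  have hmainR : 8 * ((n:ℝ) - c) ≤ 2 * (s:ℝ) + 7 * ((n:ℝ) - 1) := by
    have : ((8 * (n - c) : ℕ) : ℝ) ≤ ((2 * s + 7 * (n - 1) : ℕ) : ℝ) := by
      exact_mod_cast hmain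
    push_cast [Nat.cast_sub (le_of_lt hcn), Nat.cast_sub hn1] at this
    linarith
  -- goal : (n:ℝ) ≤ ncard * H ; use ncard ≥ s and  n ≤ s * H
  have hkey : (n:ℝ) ≤ (s:ℝ) * H := by
    nlinarith [mul_nonneg (by linarith : (0:ℝ) ≤ H - 2) (by linarith : (0:ℝ) ≤ (n:ℝ) - 2 * H),
      mul_nonneg (by linarith : (0:ℝ) ≤ H) (by linarith : (0:ℝ) ≤ H - 8 * (c:ℝ)),
      mul_nonneg (by linarith : (0:ℝ) ≤ 2 * (s:ℝ) - ((n:ℝ) + 7 - 8 * (c:ℝ))) (by linarith : (0:ℝ) ≤ H),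
      sq_nonneg H]
  calc (n:ℝ) ≤ (s:ℝ) * H := hkey
  _ ≤ ({i : Fin (n - c) | inducesStar col i}.ncard : ℝ) * H := by
      apply mul_le_mul_of_nonneg_right hncard (le_of_lt hpos)
end

section
/- For all integers p ≥ 3, q ≥ 1 and k ≥ q with q ≤ p−2, we have g^{k+1}_{q+1}(p) ≤ g^k_q(p); equivalently, if there is a Gallai-(k+1)-coloring of K_n in which every set of p vertices spans edges in at least q+2 colors, then there is a Gallai-k-coloring of K_n in which every set of p vertices spans edges in at least q+1 colors. -/
open Finset

lemma ramsey_aux (k : ℕ) :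
    ∀ (m : ℕ) (s : Fin k → ℕ), ∑ i, s i = m →
    ∃ N : ℕ, ∀ (n : ℕ) (c : Fin n → Fin n → Fin k), (∀ a b, c a b = c b a) →
      ∀ V : Finset (Fin n), N ≤ V.card →
        ∃ (i : Fin k) (S : Finset (Fin n)), S ⊆ V ∧ S.card = s i ∧
          ∀ a ∈ S, ∀ b ∈ S, a ≠ b → c a b = i := by
  intro m
  induction m using Nat.strong_induction_on with
  | _ m IH =>
    intro s hs
    by_cases hz : ∃ i, s i = 0
    · obtain ⟨i, hi⟩ := hz
      exact ⟨0, fun n c hsym V hV => ⟨i, ∅, empty_subset _, by simp [hi], by simp⟩⟩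
    rcases Nat.eq_zero_or_pos k with hk | hk
    · subst hk
      refine ⟨1, fun n c hsym V hV => ?_⟩
      have hpos : 0 < V.card := hV
      obtain ⟨v, hv⟩ := Finset.card_pos.mp hpos
      exact (c v v).elim0
    push_neg at hz
    have hz' : ∀ i, 1 ≤ s i := fun i => Nat.one_le_iff_ne_zero.mpr (hz i)
    have hm : 1 ≤ m := by
      have h0 : (1 : ℕ) ≤ s ⟨0, hk⟩ := hz' _
      have h1 : s ⟨0, hk⟩ ≤ ∑ i, s i :=
        Finset.single_le_sum (f := s) (fun i _ => Nat.zero_le _) (mem_univ _)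
      omega
    have H : ∀ i : Fin k, ∃ N : ℕ, ∀ (n : ℕ) (c : Fin n → Fin n → Fin k),
        (∀ a b, c a b = c b a) → ∀ V : Finset (Fin n), N ≤ V.card →
        ∃ (j : Fin k) (S : Finset (Fin n)), S ⊆ V ∧
          S.card = Function.update s i (s i - 1) j ∧
          ∀ a ∈ S, ∀ b ∈ S, a ≠ b → c a b = j := by
      intro i
      have hle : s i ≤ m := by
        have := Finset.single_le_sum (f := s) (fun i _ => Nat.zero_le _) (mem_univ i)
        omega
      refine IH (m - 1) (by omega) _ ?_
      rw [Finset.sum_update_of_mem (mem_univ i)]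
      have h2 : ∑ x ∈ univ.erase i, s x + s i = m := by
        rw [Finset.sum_erase_add univ s (mem_univ i), hs]
      have h3 : (univ : Finset (Fin k)) \ {i} = univ.erase i := by
        rw [Finset.sdiff_singleton_eq_erase]
      rw [h3]
      have h1 := hz' i
      omega
    choose N hN using H
    refine ⟨1 + ∑ i, N i, fun n c hsym V hV => ?_⟩
    have hpos : 0 < V.card := by omega
    obtain ⟨v, hv⟩ := Finset.card_pos.mp hpos
    set C : Fin k → Finset (Fin n) := fun i => (V.erase v).filter (fun u => c v u = i) with hC
    have hsum : ∑ i, (C i).card = (V.erase v).card :=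
      (Finset.card_eq_sum_card_fiberwise (f := fun u => c v u) (fun x _ => mem_univ _)).symm
    have hcard : ∑ i, N i ≤ ∑ i, (C i).card := by
      rw [hsum, Finset.card_erase_of_mem hv]; omega
    have hex : ∃ i, N i ≤ (C i).card := by
      by_contra hcon
      push_neg at hcon
      have hne : (univ : Finset (Fin k)).Nonempty := ⟨⟨0, hk⟩, mem_univ _⟩
      have := Finset.sum_lt_sum_of_nonempty hne (fun i _ => hcon i)
      omega
    obtain ⟨i, hi⟩ := hex
    obtain ⟨j, S, hSC, hScard, hmono⟩ := hN i n c hsym (C i) hi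
    have hCsub : C i ⊆ V.erase v := Finset.filter_subset _ _
    by_cases hji : j = i
    · subst hji
      have hvS : v ∉ S := fun h => (Finset.mem_erase.mp (hCsub (hSC h))).1 rfl
      refine ⟨j, insert v S, ?_, ?_, ?_⟩
      · exact Finset.insert_subset hv (hSC.trans (hCsub.trans (Finset.erase_subset _ _)))
      · rw [Finset.card_insert_of_notMem hvS, hScard, Function.update_self]
        have := hz' j; omega
      · intro a ha b hb hab
        rcases Finset.mem_insert.mp ha with rfl | ha'
        · rcases Finset.mem_insert.mp hb with rfl | hb'
          · exact absurd rfl hab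
          · exact (Finset.mem_filter.mp (hSC hb')).2
        · rcases Finset.mem_insert.mp hb with rfl | hb'
          · rw [hsym]; exact (Finset.mem_filter.mp (hSC ha')).2
          · exact hmono a ha' b hb' hab
    · refine ⟨j, S, hSC.trans (hCsub.trans (Finset.erase_subset _ _)), ?_, hmono⟩
      rwa [Function.update_of_ne hji] at hScard

lemma exists_ramsey (k p : ℕ) (hk : 1 ≤ k) :
    ∃ N : ℕ, ∀ (n : ℕ) (c : Fin n → Fin n → Fin k), (∀ a b, c a b = c b a) → N ≤ n →
      ∃ (i : Fin k) (S : Finset (Fin n)), S.card = p ∧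
        ∀ a ∈ S, ∀ b ∈ S, a ≠ b → c a b = i := by
  obtain ⟨N, hN⟩ := ramsey_aux k (∑ _i : Fin k, p) (fun _ => p) rfl
  refine ⟨N, fun n c hsym hn => ?_⟩
  obtain ⟨i, S, _, h2, h3⟩ := hN n c hsym univ (by simpa using hn)
  exact ⟨i, S, h2, h3⟩

lemma gallaiSet_nonempty (k q p : ℕ) (hk : 1 ≤ k) (hq : 1 ≤ q) :
    {n : ℕ | 0 < n ∧ ∀ c : Fin n → Fin n → Fin k, IsGallai c →
      ∃ S : Finset (Fin n), S.card = p ∧ (colorsOn c S).card ≤ q}.Nonempty := by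
  obtain ⟨N, hN⟩ := exists_ramsey k p hk
  refine ⟨max N 1, by positivity, fun c hc => ?_⟩
  obtain ⟨i, S, hcard, hmono⟩ := hN _ c hc.1 (le_max_left _ _)
  refine ⟨S, hcard, ?_⟩
  have hsub : colorsOn c S ⊆ {i} := by
    intro x hx
    simp only [colorsOn, mem_image, mem_filter, mem_product] at hx
    obtain ⟨⟨a, b⟩, ⟨⟨ha, hb⟩, hab⟩, rfl⟩ := hx
    simp [hmono a ha b hb hab]
  calc (colorsOn c S).card ≤ ({i} : Finset (Fin k)).card := Finset.card_le_card hsub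
    _ = 1 := Finset.card_singleton i
    _ ≤ q := hq

/-- Merge the last color into color `0`. -/
def mergeF (k : ℕ) (hk : 0 < k) : Fin (k + 1) → Fin k := fun i =>
  if h : i.val < k then ⟨i.val, h⟩ else ⟨0, hk⟩

lemma isGallai_comp {V β γ : Type*} (f : β → γ) {c : V → V → β} (hc : IsGallai c) :
    IsGallai (fun a b => f (c a b)) := by
  refine ⟨fun a b => congrArg f (hc.1 a b), fun a b d hab had hbd h =>
    hc.2 a b d hab had hbd ?_⟩
  exact ⟨fun e => h.1 (congrArg f e), fun e => h.2.1 (congrArg f e),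
    fun e => h.2.2 (congrArg f e)⟩

lemma colorsOn_comp {V β γ : Type*} [DecidableEq V] [DecidableEq β] [DecidableEq γ]
    (f : β → γ) (c : V → V → β) (S : Finset V) :
    colorsOn (fun a b => f (c a b)) S = (colorsOn c S).image f := by
  rw [colorsOn, colorsOn, Finset.image_image]
  rfl

lemma card_le_card_image_mergeF {k : ℕ} (hk : 0 < k) (T : Finset (Fin (k + 1))) :
    T.card ≤ (T.image (mergeF k hk)).card + 1 := by
  set t : Fin (k + 1) := ⟨k, Nat.lt_succ_self k⟩ with ht
  have hinj : Set.InjOn (mergeF k hk) (T.erase t) := by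
    intro x hx y hy hxy
    have hxt : x ≠ t := (Finset.mem_erase.mp (by exact_mod_cast hx)).1
    have hyt : y ≠ t := (Finset.mem_erase.mp (by exact_mod_cast hy)).1
    have hx' : x.val < k := by
      have := x.isLt
      rcases Nat.lt_or_ge x.val k with h | h
      · exact h
      · exact absurd (Fin.ext (show x.val = k by omega)) hxt
    have hy' : y.val < k := by
      have := y.isLt
      rcases Nat.lt_or_ge y.val k with h | h
      · exact h
      · exact absurd (Fin.ext (show y.val = k by omega)) hyt
    have : (mergeF k hk x).val = (mergeF k hk y).val := congrArg Fin.val hxy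
    rw [mergeF, mergeF, dif_pos hx', dif_pos hy'] at this
    exact Fin.ext this
  have h1 : (T.erase t).card = ((T.erase t).image (mergeF k hk)).card :=
    (Finset.card_image_of_injOn hinj).symm
  have h2 : (T.erase t).image (mergeF k hk) ⊆ T.image (mergeF k hk) :=
    Finset.image_subset_image (Finset.erase_subset _ _)
  have h3 : T.card ≤ (T.erase t).card + 1 := by
    by_cases h : t ∈ T
    · rw [Finset.card_erase_of_mem h]
      have := Finset.card_pos.mpr ⟨t, h⟩
      omega
    · rw [Finset.erase_eq_of_notMem h]
      omega
  have h4 := Finset.card_le_card h2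
  omega

theorem gallaiNum_succ_le (p q k : ℕ) (hp : 3 ≤ p) (hq : 1 ≤ q) (hqp : q ≤ p - 2)
    (hk : q ≤ k) :
    gallaiNum (k + 1) (q + 1) p ≤ gallaiNum k q p ∧
    ∀ n : ℕ,
      (∃ c : Fin n → Fin n → Fin (k + 1), IsGallai c ∧
        ∀ S : Finset (Fin n), S.card = p → q + 2 ≤ (colorsOn c S).card) →
      (∃ c : Fin n → Fin n → Fin k, IsGallai c ∧
        ∀ S : Finset (Fin n), S.card = p → q + 1 ≤ (colorsOn c S).card) := by
  have hk1 : 0 < k := lt_of_lt_of_le hq hk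
  constructor
  · have hne := gallaiSet_nonempty k q p hk1 hq
    have hmem := Nat.sInf_mem hne
    rw [gallaiNum, gallaiNum]
    apply Nat.sInf_le
    refine ⟨hmem.1, fun c hc => ?_⟩
    obtain ⟨S, hScard, hScol⟩ := hmem.2 (fun a b => mergeF k hk1 (c a b))
      (isGallai_comp _ hc)
    refine ⟨S, hScard, ?_⟩
    rw [colorsOn_comp] at hScol
    have := card_le_card_image_mergeF hk1 (colorsOn c S)
    omega
  · rintro n ⟨c, hc, hcol⟩
    refine ⟨fun a b => mergeF k hk1 (c a b), isGallai_comp _ hc, fun S hS => ?_⟩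
    rw [colorsOn_comp]
    have h1 := hcol S hS
    have h2 := card_le_card_image_mergeF hk1 (colorsOn c S)
    omega
end
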